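/- Let K ≥ 2 and T ≥ K be integers and let x ≥ 2K be a real number. For each k ∈ {2, …, K} let n_k ≥ 1 be an integer, let t_k ∈ {1, …, T} be pairwise distinct integers such that for every k one has Σ_{j ∈ {2,…,K} : t_j ≤ t_k} n_j ≤ t_k, and let Δ_k ∈ [0, 1] be reals. If Σ_{k=2}^K n_k Δ_k ≥ x (1 − 1/(2√K)), then there exists k ∈ {2, …, K} such that either (i) n_k ≤ 1 + t_k^{3/4} T^{1/4} / K and (n_k − 1) Δ_k ≥ (x − 2K)/(4K), or (ii) n_k > 1 + t_k^{3/4} T^{1/4} / K and Δ_k ≥ (x − 2K)/(8 √(t_k T)). -/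

import Mathlib

open Finset Real

/-!
Argue by contradiction. An arm of `A₁` has `(n_k - 1) Δ_k < (x - 2K)/(4K)` and `Δ_k ≤ 1`, so
the at most `K` arms of `A₁` contribute less than `(x - 2K)/4 + K` to `Σ n_k Δ_k`. An arm
outside `A₁` has `n_k Δ_k < (x - 2K)/(8√T) · n_k/√t_k`, and because the partial sums of the
`n_k`, ordered by `t_k`, stay below `t_k`, the sum `Σ n_k/√t_k` is a lower Riemann sum of
`∫₀ᵀ ds/√s = 2√T`; these arms contribute at most `(x - 2K)/4`. The total `x/2` is below
`x (1 - 1/(2√K))` as `K ≥ 2`.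
-/

variable {ι : Type*}

theorem div_sqrt_add_le_two_mul_sqrt_add_sub {a b : ℝ} (ha : 0 ≤ a) (hb : 0 ≤ b) :
    b / √(a + b) ≤ 2 * √(a + b) - 2 * √a := by
  rcases (add_nonneg ha hb).eq_or_lt with h | h
  · have hb0 : b = 0 := by linarith
    simp [hb0]
  · rw [div_le_iff₀ (sqrt_pos.2 h)]
    nlinarith [sq_sqrt ha, sq_sqrt h.le, sqrt_nonneg a, sq_nonneg (√(a + b) - √a)]

theorem sum_div_sqrt_le_two_mul_sqrt_sum [DecidableEq ι] (s : Finset ι) {n t : ι → ℝ}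
    (hn : ∀ k ∈ s, 0 ≤ n k) (hdom : ∀ k ∈ s, ∑ j ∈ s with t j ≤ t k, n j ≤ t k) :
    ∑ k ∈ s, n k / √(t k) ≤ 2 * √(∑ k ∈ s, n k) := by
  induction s using Finset.induction_on_max_value t with
  | empty => simp
  | insert a s has hmax ih =>
    have hsub : s ⊆ insert a s := subset_insert a s
    have hn_s : ∀ k ∈ s, 0 ≤ n k := fun k hk => hn k (hsub hk)
    have ih := ih hn_s fun k hk =>
      (sum_le_sum_of_subset_of_nonneg (filter_subset_filter _ hsub)
        fun j hj _ => hn j (mem_filter.1 hj).1).trans (hdom k (hsub hk))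
    have hna : 0 ≤ n a := hn a (mem_insert_self a s)
    have hsum_s : 0 ≤ ∑ k ∈ s, n k := sum_nonneg hn_s
    have htotal : ∑ k ∈ s, n k + n a ≤ t a := by
      have h := hdom a (mem_insert_self a s)
      rwa [filter_true_of_mem fun j hj => (mem_insert.1 hj).elim (fun h => h ▸ le_rfl) (hmax j),
        sum_insert has, add_comm] at h
    have hterm : n a / √(t a) ≤ n a / √(∑ k ∈ s, n k + n a) := by
      rcases hna.eq_or_lt with h | h
      · simp [← h]
      · exact div_le_div_of_nonneg_left hna (sqrt_pos.2 (by linarith)) (sqrt_le_sqrt htotal)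
    rw [sum_insert has, sum_insert has, add_comm (n a)]
    linarith [div_sqrt_add_le_two_mul_sqrt_add_sub hsum_s hna]

theorem sum_le_of_partial_sums_le {s : Finset ι} {n t : ι → ℝ} {T : ℝ} (hT : 0 ≤ T)
    (ht : ∀ k ∈ s, t k ≤ T) (hdom : ∀ k ∈ s, ∑ j ∈ s with t j ≤ t k, n j ≤ t k) :
    ∑ k ∈ s, n k ≤ T := by
  rcases s.eq_empty_or_nonempty with rfl | hs
  · simpa using hT
  obtain ⟨k₀, hk₀, hmax⟩ := s.exists_max_image t hs
  have h := hdom k₀ hk₀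
  rw [filter_true_of_mem hmax] at h
  exact h.trans (ht k₀ hk₀)

theorem sum_mul_le_card_mul_add_one {s : Finset ι} {n Δ : ι → ℝ} {a : ℝ}
    (h : ∀ k ∈ s, (n k - 1) * Δ k ≤ a) (hΔ : ∀ k ∈ s, Δ k ≤ 1) :
    ∑ k ∈ s, n k * Δ k ≤ #s * (a + 1) := by
  rw [← nsmul_eq_mul]
  refine sum_le_card_nsmul s _ _ fun k hk => ?_
  linarith [h k hk, hΔ k hk]

theorem sum_mul_le_of_le_div_sqrt_mul [DecidableEq ι] {s u : Finset ι} {n t Δ : ι → ℝ}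
    {T c : ℝ} (hT : 0 < T) (hc : 0 ≤ c) (hu : u ⊆ s) (hn : ∀ k ∈ s, 0 ≤ n k)
    (ht : ∀ k ∈ s, t k ≤ T) (hdom : ∀ k ∈ s, ∑ j ∈ s with t j ≤ t k, n j ≤ t k)
    (hΔ : ∀ k ∈ u, Δ k ≤ c / √(t k * T)) :
    ∑ k ∈ u, n k * Δ k ≤ 2 * c := by
  have hsT : 0 < √T := sqrt_pos.2 hT
  have hfactor : 0 ≤ c / √T := div_nonneg hc hsT.le
  calc ∑ k ∈ u, n k * Δ k
      ≤ ∑ k ∈ u, c / √T * (n k / √(t k)) := sum_le_sum fun k hk => by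
        calc n k * Δ k ≤ n k * (c / √(t k * T)) :=
              mul_le_mul_of_nonneg_left (hΔ k hk) (hn k (hu hk))
          _ = c / √T * (n k / √(t k)) := by rw [sqrt_mul' _ hT.le]; ring
    _ ≤ ∑ k ∈ s, c / √T * (n k / √(t k)) :=
        sum_le_sum_of_subset_of_nonneg hu fun k hk _ =>
          mul_nonneg hfactor (div_nonneg (hn k hk) (sqrt_nonneg _))
    _ = c / √T * ∑ k ∈ s, n k / √(t k) := (mul_sum _ _ _).symm
    _ ≤ c / √T * (2 * √T) := by
        gcongr
        exact (sum_div_sqrt_le_two_mul_sqrt_sum s hn hdom).trans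
          (by gcongr; exact sum_le_of_partial_sums_le hT.le ht hdom)
    _ = 2 * c := by field_simp

theorem stmt7_general (K T : ℕ) (hK : 2 ≤ K) (hT : K ≤ T) (x : ℝ) (hx : 2 * (K : ℝ) ≤ x)
    (n t : ℕ → ℕ) (Δ : ℕ → ℝ)
    (ht : ∀ k ∈ Finset.Icc 2 K, t k ∈ Finset.Icc 1 T)
    (hdom : ∀ k ∈ Finset.Icc 2 K,
      (∑ j ∈ (Finset.Icc 2 K).filter (fun j => t j ≤ t k), (n j : ℝ)) ≤ (t k : ℝ))
    (hΔ : ∀ k ∈ Finset.Icc 2 K, Δ k ∈ Set.Icc (0 : ℝ) 1)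
    (hreg : x * (1 - 1 / (2 * Real.sqrt K)) ≤ ∑ k ∈ Finset.Icc 2 K, (n k : ℝ) * Δ k) :
    ∃ k ∈ Finset.Icc 2 K,
      ((n k : ℝ) ≤ 1 + (t k : ℝ) ^ ((3 : ℝ) / 4) * (T : ℝ) ^ ((1 : ℝ) / 4) / K ∧
        (x - 2 * K) / (4 * K) ≤ ((n k : ℝ) - 1) * Δ k) ∨
      (1 + (t k : ℝ) ^ ((3 : ℝ) / 4) * (T : ℝ) ^ ((1 : ℝ) / 4) / K < (n k : ℝ) ∧
        (x - 2 * K) / (8 * Real.sqrt ((t k : ℝ) * T)) ≤ Δ k) := by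
  by_contra! hcon
  set S := Finset.Icc 2 K
  set P : ℕ → Prop :=
    fun k => (n k : ℝ) ≤ 1 + (t k : ℝ) ^ ((3 : ℝ) / 4) * (T : ℝ) ^ ((1 : ℝ) / 4) / K
  have hK₂ : (2 : ℝ) ≤ K := by exact_mod_cast hK
  have hsmall : ∑ k ∈ S with P k, (n k : ℝ) * Δ k ≤ (x - 2 * K) / 4 + K :=
    calc ∑ k ∈ S with P k, (n k : ℝ) * Δ k
        ≤ #(S.filter P) * ((x - 2 * K) / (4 * K) + 1) :=
          sum_mul_le_card_mul_add_one
            (fun k hk => ((hcon k (mem_filter.1 hk).1).1 (mem_filter.1 hk).2).le)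
            (fun k hk => (hΔ k (mem_filter.1 hk).1).2)
      _ ≤ K * ((x - 2 * K) / (4 * K) + 1) := by
          have : 0 ≤ x - 2 * K := by linarith
          gcongr
          exact_mod_cast (card_filter_le S P).trans (by simp [S])
      _ = (x - 2 * K) / 4 + K := by field_simp
  have hlarge : ∑ k ∈ S with ¬P k, (n k : ℝ) * Δ k ≤ 2 * ((x - 2 * K) / 8) := by
    refine sum_mul_le_of_le_div_sqrt_mul (s := S) (t := fun k => (t k : ℝ)) (T := T)
      (by exact_mod_cast (by omega : 0 < T)) (by linarith) (filter_subset _ _)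
      (fun k _ => Nat.cast_nonneg _) (fun k hk => by exact_mod_cast (mem_Icc.1 (ht k hk)).2)
      (fun k hk => by simpa only [Nat.cast_le] using hdom k hk) fun k hk => ?_
    rw [div_div]
    exact ((hcon k (mem_filter.1 hk).1).2 (not_le.1 (mem_filter.1 hk).2)).le
  have hhalf : x / 2 < x * (1 - 1 / (2 * √K)) := by
    have hsqrtK : 1 < √(K : ℝ) := lt_sqrt_of_sq_lt (by linarith)
    have : 1 / (2 * √(K : ℝ)) < 1 / 2 := one_div_lt_one_div_of_lt two_pos (by linarith)
    nlinarith
  linarith [sum_filter_add_sum_filter_not S P fun k => (n k : ℝ) * Δ k]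

/-- the any-time decomposition from the proof of Theorem 5: with `n_k`
pulls, last-pull times `t_k ∈ {1, …, T}` (pairwise distinct and dominating the cumulative
pull counts of arms pulled no later) and gaps `Δ_k ∈ [0,1]` for the arms `k ∈ {2, …, K}`,
if `Σ_k n_k Δ_k ≥ x(1 − 1/(2√K))` then some arm `k` satisfies either
(i) `n_k ≤ 1 + t_k^{3/4} T^{1/4}/K` and `(n_k − 1)Δ_k ≥ (x − 2K)/(4K)`, or
(ii) `n_k > 1 + t_k^{3/4} T^{1/4}/K` and `Δ_k ≥ (x − 2K)/(8 √(t_k T))`. -/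
theorem stmt7 (K T : ℕ) (hK : 2 ≤ K) (hT : K ≤ T) (x : ℝ) (hx : 2 * (K : ℝ) ≤ x)
    (n t : ℕ → ℕ) (Δ : ℕ → ℝ)
    (hn : ∀ k ∈ Finset.Icc 2 K, 1 ≤ n k)
    (ht : ∀ k ∈ Finset.Icc 2 K, t k ∈ Finset.Icc 1 T)
    (htdist : ∀ k ∈ Finset.Icc 2 K, ∀ j ∈ Finset.Icc 2 K, t k = t j → k = j)
    (hdom : ∀ k ∈ Finset.Icc 2 K,
      (∑ j ∈ (Finset.Icc 2 K).filter (fun j => t j ≤ t k), (n j : ℝ)) ≤ (t k : ℝ))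
    (hΔ : ∀ k ∈ Finset.Icc 2 K, Δ k ∈ Set.Icc (0 : ℝ) 1)
    (hreg : x * (1 - 1 / (2 * Real.sqrt K)) ≤ ∑ k ∈ Finset.Icc 2 K, (n k : ℝ) * Δ k) :
    ∃ k ∈ Finset.Icc 2 K,
      ((n k : ℝ) ≤ 1 + (t k : ℝ) ^ ((3 : ℝ) / 4) * (T : ℝ) ^ ((1 : ℝ) / 4) / K ∧
        (x - 2 * K) / (4 * K) ≤ ((n k : ℝ) - 1) * Δ k) ∨
      (1 + (t k : ℝ) ^ ((3 : ℝ) / 4) * (T : ℝ) ^ ((1 : ℝ) / 4) / K < (n k : ℝ) ∧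
        (x - 2 * K) / (8 * Real.sqrt ((t k : ℝ) * T)) ≤ Δ k) :=
  stmt7_general K T hK hT x hx n t Δ ht hdom hΔ hreg
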